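/- Suppose all entries of π, of each π^{(t)}, and of each φ^{(t)} are nonnegative. Define the Viterbi quantities r̃(0, u) = π(u) · φ^{(0)}(y 0, u) and, for 1 ≤ t ≤ T−1, r̃(t, v) = φ^{(t)}(y t, v) · max_{u ∈ Fin k} (r̃(t−1, u) · π^{(t)}(u, v)). Then for every t and v, r̃(t, v) equals the maximum, over all partial latent paths ū : {0,…,t} → Fin k with ū(t) = v, of the partial weight π(ū 0) · ∏_{s=1}^{t} π^{(s)}(ū(s−1), ū s) · ∏_{s=0}^{t} φ^{(s)}(y s, ū s); in particular max_{v} r̃(T−1, v) = max_{ū : Fin T → Fin k} w(ū). -/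

import Mathlib

/-!
Latent Markov model with `k ≥ 1` latent states, `l ≥ 1` response categories and
`T + 1 ≥ 1` time occasions (occasions are indexed by `0, …, T`, so that the last
occasion, written `T − 1` in the paper for `T` occasions, is here `T`).

Bellman's principle of optimality. A partial path ending at `v` at occasion `t + 1` is a
partial path ending at some `u` at occasion `t` followed by the step `u → v`, and its weight is
`Φ_{t+1}(y_{t+1}, v) · (weight up to t) · P_{t+1}(u, v)`. Multiplication by a nonnegative real
commutes with finite maxima, so maximising first over paths ending at `u` and then over `u`
gives the Viterbi recursion; `r̃` and the maximal partial weight thus agree by induction on `t`.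
-/

/-- Extension of a partial latent path `ub : {0,…,t} → Fin k` to all of `ℕ`;
for `s ≤ t` it returns `ub s`. -/
def extPath {k t : ℕ} (u : Fin (t + 1) → Fin k) (s : ℕ) : Fin k :=
  u ⟨min s t, Nat.lt_succ_of_le (min_le_right s t)⟩

/-- The partial weight of a latent path up to occasion `t`.
For `t = T` (the last occasion) this is the full weight `w(ub)`. -/
noncomputable def pweight {k l : ℕ} (π : Fin k → ℝ) (P : ℕ → Fin k → Fin k → ℝ)
    (Φ : ℕ → Fin l → Fin k → ℝ) (y : ℕ → Fin l) (t : ℕ) (u : ℕ → Fin k) : ℝ :=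
  π (u 0) * (∏ s ∈ Finset.Icc 1 t, P s (u (s - 1)) (u s)) *
    ∏ s ∈ Finset.range (t + 1), Φ s (y s) (u s)

open Finset

section ExtPath

variable {k t : ℕ}

lemma extPath_of_le (u : Fin (t + 1) → Fin k) {s : ℕ} (hs : s ≤ t) :
    extPath u s = u ⟨s, Nat.lt_succ_of_le hs⟩ := by
  simp only [extPath, Nat.min_eq_left hs]

lemma extPath_self (u : Fin (t + 1) → Fin k) : extPath u t = u (Fin.last t) :=
  extPath_of_le u le_rfl

lemma extPath_snoc_of_le (u : Fin (t + 1) → Fin k) (v : Fin k) {s : ℕ} (hs : s ≤ t) :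
    extPath (Fin.snoc u v : Fin (t + 2) → Fin k) s = extPath u s := by
  rw [extPath_of_le _ (hs.trans t.le_succ), extPath_of_le u hs]
  exact Fin.snoc_castSucc (i := ⟨s, Nat.lt_succ_of_le hs⟩) ..

lemma extPath_snoc_self (u : Fin (t + 1) → Fin k) (v : Fin k) :
    extPath (Fin.snoc u v : Fin (t + 2) → Fin k) (t + 1) = v := by
  rw [extPath_self, Fin.snoc_last]

end ExtPath

section Weight

variable {k l : ℕ} (π : Fin k → ℝ) (P : ℕ → Fin k → Fin k → ℝ) (Φ : ℕ → Fin l → Fin k → ℝ)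
  (y : ℕ → Fin l)

lemma pweight_congr {t : ℕ} {u u' : ℕ → Fin k} (h : ∀ s ≤ t, u s = u' s) :
    pweight π P Φ y t u = pweight π P Φ y t u' := by
  unfold pweight
  rw [h 0 t.zero_le]
  congr 1
  · congr 1
    refine prod_congr rfl fun s hs => ?_
    have hst : s ≤ t := (mem_Icc.mp hs).2
    rw [h (s - 1) ((s.sub_le 1).trans hst), h s hst]
  · exact prod_congr rfl fun s hs => by rw [h s (Nat.lt_succ_iff.mp (mem_range.mp hs))]

lemma pweight_succ (t : ℕ) (u : ℕ → Fin k) :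
    pweight π P Φ y (t + 1) u =
      Φ (t + 1) (y (t + 1)) (u (t + 1)) * (pweight π P Φ y t u * P (t + 1) (u t) (u (t + 1))) := by
  unfold pweight
  rw [prod_Icc_succ_top (Nat.le_add_left 1 t), prod_range_succ, Nat.add_sub_cancel]
  ring

lemma pweight_extPath_snoc {t : ℕ} (u : Fin (t + 1) → Fin k) (v : Fin k) :
    pweight π P Φ y (t + 1) (extPath (Fin.snoc u v : Fin (t + 2) → Fin k)) =
      Φ (t + 1) (y (t + 1)) v *
        (pweight π P Φ y t (extPath u) * P (t + 1) (u (Fin.last t)) v) := by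
  rw [pweight_succ, extPath_snoc_self, extPath_snoc_of_le u v le_rfl, extPath_self,
    pweight_congr π P Φ y fun s hs => extPath_snoc_of_le u v hs]

end Weight

section Paths

variable {k : ℕ}

def pathsEndingAt (t : ℕ) (v : Fin k) : Finset (Fin (t + 1) → Fin k) :=
  univ.filter fun u => u (Fin.last t) = v

lemma pathsEndingAt_nonempty (t : ℕ) (v : Fin k) : (pathsEndingAt t v).Nonempty :=
  ⟨fun _ => v, mem_filter.mpr ⟨mem_univ _, rfl⟩⟩

lemma image_snoc_univ (t : ℕ) (v : Fin k) :
    univ.image (fun u : Fin (t + 1) → Fin k => (Fin.snoc u v : Fin (t + 2) → Fin k)) =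
      pathsEndingAt (t + 1) v := by
  ext u
  simp only [pathsEndingAt, mem_image, mem_univ, true_and, mem_filter]
  constructor
  · rintro ⟨u', rfl⟩
    exact Fin.snoc_last ..
  · rintro rfl
    exact ⟨Fin.init u, Fin.snoc_init_self u⟩

lemma biUnion_pathsEndingAt (t : ℕ) : univ.biUnion (pathsEndingAt (k := k) t) = univ :=
  biUnion_filter_eq_of_maps_to fun _ _ => mem_univ _

end Paths

section MaxWeight

variable {k l : ℕ} (π : Fin k → ℝ) (P : ℕ → Fin k → Fin k → ℝ) (Φ : ℕ → Fin l → Fin k → ℝ)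
  (y : ℕ → Fin l)

noncomputable def maxPartialWeight (t : ℕ) (v : Fin k) : ℝ :=
  (pathsEndingAt t v).sup' (pathsEndingAt_nonempty t v) fun u => pweight π P Φ y t (extPath u)

lemma maxPartialWeight_zero (v : Fin k) : maxPartialWeight π P Φ y 0 v = π v * Φ 0 (y 0) v := by
  refine (sup'_congr _ rfl fun u hu => ?_).trans (sup'_const _ _)
  have hv : extPath u 0 = v := (mem_filter.mp hu).2
  simp [pweight, hv]

lemma maxPartialWeight_succ (t : ℕ) (v : Fin k) (hP : ∀ u, 0 ≤ P (t + 1) u v)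
    (hΦ : 0 ≤ Φ (t + 1) (y (t + 1)) v) :
    maxPartialWeight π P Φ y (t + 1) v = Φ (t + 1) (y (t + 1)) v *
      univ.sup' ⟨v, mem_univ v⟩ fun u => maxPartialWeight π P Φ y t u * P (t + 1) u v := by
  classical
  have hfiber : ∀ u, maxPartialWeight π P Φ y t u * P (t + 1) u v =
      (pathsEndingAt t u).sup' (pathsEndingAt_nonempty t u)
        fun u' => pweight π P Φ y t (extPath u') * P (t + 1) (u' (Fin.last t)) v := by
    intro u
    rw [maxPartialWeight, sup'_mul₀ (hP u)]
    exact sup'_congr _ rfl fun u' hu' => by rw [(mem_filter.mp hu').2]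
  refine (sup'_congr _ (image_snoc_univ t v).symm fun _ _ => rfl).trans ?_
  simp only [hfiber]
  rw [sup'_image, ← sup'_biUnion _ ⟨v, mem_univ v⟩ (pathsEndingAt_nonempty t), mul₀_sup' hΦ]
  exact sup'_congr _ (biUnion_pathsEndingAt t).symm fun u _ => pweight_extPath_snoc π P Φ y u v

lemma sup'_maxPartialWeight [Nonempty (Fin k)] (t : ℕ) :
    univ.sup' univ_nonempty (maxPartialWeight π P Φ y t) =
      univ.sup' univ_nonempty fun u : Fin (t + 1) → Fin k => pweight π P Φ y t (extPath u) := by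
  classical
  exact (sup'_biUnion _ univ_nonempty (pathsEndingAt_nonempty t)).symm.trans
    (sup'_congr _ (biUnion_pathsEndingAt t) fun _ _ => rfl)

end MaxWeight

theorem viterbi_forward_eq_max_partial_paths_general
    (k l T : ℕ) (hk : 1 ≤ k)
    (π : Fin k → ℝ) (P : ℕ → Fin k → Fin k → ℝ) (Φ : ℕ → Fin l → Fin k → ℝ)
    (hP : ∀ t, 1 ≤ t → t ≤ T → ∀ u v, 0 ≤ P t u v)
    (hΦ : ∀ t ≤ T, ∀ yv u, 0 ≤ Φ t yv u)
    (y : ℕ → Fin l) (r : ℕ → Fin k → ℝ)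
    (hr0 : ∀ u, r 0 u = π u * Φ 0 (y 0) u)
    (hrrec : ∀ t, 1 ≤ t → t ≤ T → ∀ v,
      r t v = Φ t (y t) v *
        Finset.univ.sup' ⟨⟨0, hk⟩, Finset.mem_univ _⟩ (fun u => r (t - 1) u * P t u v)) :
    (∀ t ≤ T, ∀ v : Fin k,
      r t v = (Finset.univ.filter
          (fun ub : Fin (t + 1) → Fin k => ub (Fin.last t) = v)).sup'
        ⟨fun _ => v, Finset.mem_filter.mpr ⟨Finset.mem_univ _, rfl⟩⟩
        (fun ub => pweight π P Φ y t (extPath ub))) ∧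
    Finset.univ.sup' ⟨⟨0, hk⟩, Finset.mem_univ _⟩ (fun v => r T v) =
      Finset.univ.sup' ⟨fun _ => ⟨0, hk⟩, Finset.mem_univ _⟩
        (fun ub : Fin (T + 1) → Fin k => pweight π P Φ y T (extPath ub)) := by
  have hmax : ∀ t ≤ T, ∀ v, r t v = maxPartialWeight π P Φ y t v := by
    intro t
    induction t with
    | zero => exact fun _ v => (hr0 v).trans (maxPartialWeight_zero π P Φ y v).symm
    | succ t ih =>
      intro ht v
      have hP' : ∀ u, 0 ≤ P (t + 1) u v := fun u => hP (t + 1) t.succ_pos ht u v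
      rw [hrrec (t + 1) t.succ_pos ht v, maxPartialWeight_succ π P Φ y t v hP' (hΦ _ ht _ _)]
      simp only [Nat.add_sub_cancel, ih (Nat.le_of_succ_le ht)]
  have : Nonempty (Fin k) := ⟨⟨0, hk⟩⟩
  exact ⟨hmax, (sup'_congr _ rfl fun v _ => hmax T le_rfl v).trans
    (sup'_maxPartialWeight π P Φ y T)⟩

/-- The Viterbi quantities `r̃(t,v)` equal the maximum of the partial
weight over all partial latent paths ending at `v` at occasion `t`; in particular
`max_v r̃(T,v)` is the maximal weight over all full latent paths. -/
theorem viterbi_forward_eq_max_partial_paths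
    (k l T : ℕ) (hk : 1 ≤ k) (hl : 1 ≤ l)
    (π : Fin k → ℝ) (P : ℕ → Fin k → Fin k → ℝ) (Φ : ℕ → Fin l → Fin k → ℝ)
    (hπ : ∀ u, 0 ≤ π u)
    (hP : ∀ t, 1 ≤ t → t ≤ T → ∀ u v, 0 ≤ P t u v)
    (hΦ : ∀ t ≤ T, ∀ yv u, 0 ≤ Φ t yv u)
    (y : ℕ → Fin l) (r : ℕ → Fin k → ℝ)
    (hr0 : ∀ u, r 0 u = π u * Φ 0 (y 0) u)
    (hrrec : ∀ t, 1 ≤ t → t ≤ T → ∀ v,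
      r t v = Φ t (y t) v *
        Finset.univ.sup' ⟨⟨0, hk⟩, Finset.mem_univ _⟩ (fun u => r (t - 1) u * P t u v)) :
    (∀ t ≤ T, ∀ v : Fin k,
      r t v = (Finset.univ.filter
          (fun ub : Fin (t + 1) → Fin k => ub (Fin.last t) = v)).sup'
        ⟨fun _ => v, Finset.mem_filter.mpr ⟨Finset.mem_univ _, rfl⟩⟩
        (fun ub => pweight π P Φ y t (extPath ub))) ∧
    Finset.univ.sup' ⟨⟨0, hk⟩, Finset.mem_univ _⟩ (fun v => r T v) =
      Finset.univ.sup' ⟨fun _ => ⟨0, hk⟩, Finset.mem_univ _⟩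
        (fun ub : Fin (T + 1) → Fin k => pweight π P Φ y T (extPath ub)) :=
  viterbi_forward_eq_max_partial_paths_general k l T hk π P Φ hP hΦ y r hr0 hrrec
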